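/- Let A be a Heyting algebra with a subordination relation ≺, canonical extension A^δ, and ■ : A → A^δ given by ■x = ⋁{b ∈ A | b ≺ x}. Then the following are equivalent: (i) for all a, x, y ∈ A, if a ≺ x and a ∧ x ≺ y then a ≺ x ∧ y; (ii) for all x, y ∈ A, ■x ∧ (x → ■y) ≤ ■(x ∧ y) holds in A^δ (where → is the Heyting implication of A, extended appropriately, applied to elements of A). -/

import Mathlib

/-!
For `a ∈ A`, compactness gives `a ≺ x ↔ a ≤ ■x`, which turns (ii) into (i) at once.
Conversely, by density it suffices to bound closed elements `k ≤ ■x ∧ (x → ■y)`. Compactness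
yields `a ≺ x` with `k ≤ a` and `c ≺ y` with `k ∧ x ≤ c`; then `e = a ∧ (x → c)` lies in `A`,
satisfies `e ≺ x` and `e ∧ x ≺ y`, so (i) gives `e ≺ x ∧ y` and `k ≤ e ≤ ■(x ∧ y)`.
-/

variable {α : Type*} [Order.Frame α]

/-- An element is closed if it is the meet of a nonempty subset of S. -/
def IsClosedElem (S : Set α) (k : α) : Prop :=
  ∃ F : Set α, F ⊆ S ∧ F.Nonempty ∧ k = sInf F

/-- An element is open if it is the join of a nonempty subset of S. -/
def IsOpenElem (S : Set α) (o : α) : Prop :=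
  ∃ I : Set α, I ⊆ S ∧ I.Nonempty ∧ o = sSup I

/-- S is dense: every element is a join of closed elements and a meet of open elements. -/
def IsDenseSub (S : Set α) : Prop :=
  ∀ u : α, u = sSup {k | IsClosedElem S k ∧ k ≤ u} ∧
           u = sInf {o | IsOpenElem S o ∧ u ≤ o}

/-- S is compact. -/
def IsCompactSub (S : Set α) : Prop :=
  ∀ F I : Set α, F ⊆ S → I ⊆ S → F.Nonempty → I.Nonempty → sInf F ≤ sSup I →
    ∃ a ∈ F, ∃ b ∈ I, a ≤ b

/-- S is a bounded sublattice. -/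
def IsBoundedSublattice (S : Set α) : Prop :=
  ⊥ ∈ S ∧ ⊤ ∈ S ∧ ∀ a ∈ S, ∀ b ∈ S, a ⊔ b ∈ S ∧ a ⊓ b ∈ S

/-- A subordination relation on the sublattice S. -/
def IsSubordination (S : Set α) (R : α → α → Prop) : Prop :=
  R ⊥ ⊥ ∧ R ⊤ ⊤ ∧
  (∀ a ∈ S, ∀ b ∈ S, ∀ c ∈ S, R a b → R a c → R a (b ⊓ c)) ∧
  (∀ a ∈ S, ∀ b ∈ S, ∀ c ∈ S, R a c → R b c → R (a ⊔ b) c) ∧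
  (∀ a ∈ S, ∀ b ∈ S, ∀ c ∈ S, ∀ d ∈ S, a ≤ b → R b c → c ≤ d → R a d)


theorem IsClosedElem.of_mem {S : Set α} {a : α} (ha : a ∈ S) : IsClosedElem S a :=
  ⟨{a}, Set.singleton_subset_iff.mpr ha, Set.singleton_nonempty a, sInf_singleton.symm⟩

theorem IsClosedElem.inf_mem {S : Set α} {k x : α} (hk : IsClosedElem S k) (hx : x ∈ S) :
    IsClosedElem S (k ⊓ x) := by
  obtain ⟨F, hFS, -, rfl⟩ := hk
  exact ⟨insert x F, Set.insert_subset hx hFS, Set.insert_nonempty x F, by rw [sInf_insert, inf_comm]⟩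

theorem IsDenseSub.le_of_forall_isClosedElem {S : Set α} (hd : IsDenseSub S) {u v : α}
    (h : ∀ k, IsClosedElem S k → k ≤ u → k ≤ v) : u ≤ v := by
  rw [(hd u).1]
  exact sSup_le fun k ⟨hk, hku⟩ => h k hk hku

theorem IsCompactSub.exists_le_of_le_sSup {S I : Set α} (hc : IsCompactSub S) {k : α}
    (hk : IsClosedElem S k) (hIS : I ⊆ S) (hI : I.Nonempty) (h : k ≤ sSup I) :
    ∃ b ∈ I, k ≤ b := by
  obtain ⟨F, hFS, hF, rfl⟩ := hk
  obtain ⟨a, haF, b, hbI, hab⟩ := hc F I hFS hIS hF hI h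
  exact ⟨b, hbI, (sInf_le haF).trans hab⟩

namespace IsSubordination

variable {S : Set α} {R : α → α → Prop}

theorem rel_of_le_of_rel (hR : IsSubordination S R) {a b c d : α} (ha : a ∈ S) (hb : b ∈ S)
    (hc : c ∈ S) (hd : d ∈ S) (hab : a ≤ b) (hbc : R b c) (hcd : c ≤ d) : R a d :=
  hR.2.2.2.2 a ha b hb c hc d hd hab hbc hcd

theorem bot_rel (hR : IsSubordination S R) (hbot : ⊥ ∈ S) {x : α} (hx : x ∈ S) : R ⊥ x :=
  hR.rel_of_le_of_rel hbot hbot hbot hx le_rfl hR.1 bot_le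

theorem exists_rel_of_le_sSup (hR : IsSubordination S R) (hbot : ⊥ ∈ S) (hc : IsCompactSub S)
    {k x : α} (hk : IsClosedElem S k) (hx : x ∈ S) (h : k ≤ sSup {b | b ∈ S ∧ R b x}) :
    ∃ a ∈ S, R a x ∧ k ≤ a := by
  obtain ⟨a, ⟨haS, hax⟩, hka⟩ := hc.exists_le_of_le_sSup hk (fun _ hb => hb.1)
    (⟨⊥, hbot, hR.bot_rel hbot hx⟩ : {b | b ∈ S ∧ R b x}.Nonempty) h
  exact ⟨a, haS, hax, hka⟩

theorem rel_iff_le_sSup (hR : IsSubordination S R) (hbot : ⊥ ∈ S) (hc : IsCompactSub S)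
    {a x : α} (ha : a ∈ S) (hx : x ∈ S) : R a x ↔ a ≤ sSup {b | b ∈ S ∧ R b x} := by
  refine ⟨fun hax => le_sSup ⟨ha, hax⟩, fun h => ?_⟩
  obtain ⟨b, hb, hbx, hab⟩ := hR.exists_rel_of_le_sSup hbot hc (.of_mem ha) hx h
  exact hR.rel_of_le_of_rel ha hb hx hx hab hbx le_rfl

end IsSubordination

theorem stmt19 (S : Set α) (hS : IsBoundedSublattice S)
    (hhimp : ∀ a ∈ S, ∀ b ∈ S, a ⇨ b ∈ S)
    (hd : IsDenseSub S) (hc : IsCompactSub S)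
    (R : α → α → Prop) (hR : IsSubordination S R) :
    (∀ a ∈ S, ∀ x ∈ S, ∀ y ∈ S, R a x → R (a ⊓ x) y → R a (x ⊓ y)) ↔
    (∀ x ∈ S, ∀ y ∈ S,
      sSup {b | b ∈ S ∧ R b x} ⊓ (x ⇨ sSup {b | b ∈ S ∧ R b y}) ≤
        sSup {b | b ∈ S ∧ R b (x ⊓ y)}) := by
  obtain ⟨hbot, -, hlat⟩ := hS
  constructor
  · intro h x hx y hy
    refine hd.le_of_forall_isClosedElem fun k hk hkle => ?_
    obtain ⟨a, ha, hax, hka⟩ := hR.exists_rel_of_le_sSup hbot hc hk hx (hkle.trans inf_le_left)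
    obtain ⟨c, hc', hcy, hkxc⟩ := hR.exists_rel_of_le_sSup hbot hc (hk.inf_mem hx) hy
      (le_himp_iff.mp (hkle.trans inf_le_right))
    have he : a ⊓ (x ⇨ c) ∈ S := (hlat a ha _ (hhimp x hx c hc')).2
    have hex : R (a ⊓ (x ⇨ c)) x := hR.rel_of_le_of_rel he ha hx hx inf_le_left hax le_rfl
    have hexy : R (a ⊓ (x ⇨ c) ⊓ x) y :=
      hR.rel_of_le_of_rel (hlat _ he x hx).2 hc' hy hy
        ((inf_le_inf_right x inf_le_right).trans himp_inf_le) hcy le_rfl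
    exact (le_inf hka (le_himp_iff.mpr hkxc)).trans
      (le_sSup ⟨he, h _ he x hx y hy hex hexy⟩)
  · intro h a ha x hx y hy hax haxy
    have hxy : x ⊓ y ∈ S := (hlat x hx y hy).2
    rw [hR.rel_iff_le_sSup hbot hc ha hx] at hax
    rw [hR.rel_iff_le_sSup hbot hc (hlat a ha x hx).2 hy, ← le_himp_iff] at haxy
    exact (hR.rel_iff_le_sSup hbot hc ha hxy).mpr ((le_inf hax haxy).trans (h x hx y hy))
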